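/- arXiv:1906.10936 — 2 statements merged into one kernel-verified Lean document; each statement's English description precedes it below -/
import Mathlib

section
/- Let M = (E, ρ) be a simple binary matroid. A cyclic flat Z of M is an atom of the lattice of cyclic flats Z(M) (that is, Z ≠ ∅ and there is no cyclic flat Z' with ∅ ⊊ Z' ⊊ Z) if and only if η(Z) = 1, where η(Z) = |Z| − ρ(Z). -/
open Finset

structure FinMatroid (α : Type*) [DecidableEq α] where
  E : Finset α
  rk : Finset α → ℕ
  rk_le_card : ∀ A, A ⊆ E → rk A ≤ A.card
  rk_mono : ∀ A B, A ⊆ B → B ⊆ E → rk A ≤ rk B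
  rk_submod : ∀ A B, A ⊆ E → B ⊆ E → rk (A ∪ B) + rk (A ∩ B) ≤ rk A + rk B

namespace FinMatroid

variable {α : Type*} [DecidableEq α]

/-- The closure operator `cl(A) = {e ∈ E : ρ(A ∪ {e}) = ρ(A)}`. -/
def cl (M : FinMatroid α) (A : Finset α) : Finset α :=
  M.E.filter fun e => M.rk (insert e A) = M.rk A

/-- The cyclic operator `cyc(A) = {e ∈ A : ρ(A − {e}) = ρ(A)}`. -/
def cyc (M : FinMatroid α) (A : Finset α) : Finset α :=
  A.filter fun e => M.rk (A.erase e) = M.rk A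

/-- A flat is a set fixed by the closure operator. -/
def IsFlat (M : FinMatroid α) (F : Finset α) : Prop :=
  F ⊆ M.E ∧ M.cl F = F

/-- A cyclic set is a set fixed by the cyclic operator. -/
def IsCyclic (M : FinMatroid α) (U : Finset α) : Prop :=
  U ⊆ M.E ∧ M.cyc U = U

/-- A cyclic flat is a set fixed by both the closure and the cyclic operators. -/
def IsCyclicFlat (M : FinMatroid α) (Z : Finset α) : Prop :=
  Z ⊆ M.E ∧ M.cl Z = Z ∧ M.cyc Z = Z

/-- The minor `M|Y/X`: restriction to `Y` followed by contraction of `X`. -/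
def minor (M : FinMatroid α) (X Y : Finset α) (hXY : X ⊆ Y) (hY : Y ⊆ M.E) :
    FinMatroid α where
  E := Y \ X
  rk A := M.rk (A ∪ X) - M.rk X
  rk_le_card := by
    intro A hA
    have hAE : A ⊆ M.E := fun a ha => hY (mem_sdiff.mp (hA ha)).1
    have hXE : X ⊆ M.E := hXY.trans hY
    have h1 := M.rk_submod A X hAE hXE
    have h2 := M.rk_le_card A hAE
    show M.rk (A ∪ X) - M.rk X ≤ A.card
    omega
  rk_mono := by
    intro A B hAB hB
    have hBE : B ⊆ M.E := fun a ha => hY (mem_sdiff.mp (hB ha)).1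
    have hBX : B ∪ X ⊆ M.E := union_subset hBE (hXY.trans hY)
    have := M.rk_mono (A ∪ X) (B ∪ X) (union_subset_union hAB Subset.rfl) hBX
    show M.rk (A ∪ X) - M.rk X ≤ M.rk (B ∪ X) - M.rk X
    omega
  rk_submod := by
    intro A B hA hB
    have hAE : A ⊆ M.E := fun a ha => hY (mem_sdiff.mp (hA ha)).1
    have hBE : B ⊆ M.E := fun a ha => hY (mem_sdiff.mp (hB ha)).1
    have hXE : X ⊆ M.E := hXY.trans hY
    have hAX : A ∪ X ⊆ M.E := union_subset hAE hXE
    have hBX : B ∪ X ⊆ M.E := union_subset hBE hXE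
    have hsub := M.rk_submod (A ∪ X) (B ∪ X) hAX hBX
    have e1 : (A ∪ X) ∪ (B ∪ X) = (A ∪ B) ∪ X := by
      ext x; simp only [mem_union]; tauto
    have e2 : (A ∪ X) ∩ (B ∪ X) = (A ∩ B) ∪ X := by
      ext x; simp only [mem_union, mem_inter]; tauto
    rw [e1, e2] at hsub
    have h1 : M.rk X ≤ M.rk (A ∪ X) := M.rk_mono X _ subset_union_right hAX
    have h2 : M.rk X ≤ M.rk (B ∪ X) := M.rk_mono X _ subset_union_right hBX
    have hIX : (A ∩ B) ∪ X ⊆ M.E := union_subset (inter_subset_left.trans hAE) hXE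
    have hUX : (A ∪ B) ∪ X ⊆ M.E := union_subset (union_subset hAE hBE) hXE
    have h3 : M.rk X ≤ M.rk ((A ∩ B) ∪ X) := M.rk_mono X _ subset_union_right hIX
    have h4 : M.rk X ≤ M.rk ((A ∪ B) ∪ X) := M.rk_mono X _ subset_union_right hUX
    show M.rk ((A ∪ B) ∪ X) - M.rk X + (M.rk ((A ∩ B) ∪ X) - M.rk X) ≤
      (M.rk (A ∪ X) - M.rk X) + (M.rk (B ∪ X) - M.rk X)
    omega

/-- The restriction `M|Y`. -/
def restrict (M : FinMatroid α) (Y : Finset α) (hY : Y ⊆ M.E) : FinMatroid α where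
  E := Y
  rk := M.rk
  rk_le_card := fun A hA => M.rk_le_card A (hA.trans hY)
  rk_mono := fun A B hAB hB => M.rk_mono A B hAB (hB.trans hY)
  rk_submod := fun A B hA hB => M.rk_submod A B (hA.trans hY) (hB.trans hY)

/-- `M` is binary: it is the matroid of linear dependence of a family of
vectors over the field with two elements. -/
def IsBinary (M : FinMatroid α) : Prop :=
  ∃ (m : ℕ) (φ : α → (Fin m → ZMod 2)),
    ∀ A : Finset α, A ⊆ M.E →
      M.rk A = Module.finrank (ZMod 2) (Submodule.span (ZMod 2) (φ '' (A : Set α)))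

def Simple (M : FinMatroid α) : Prop :=
  (∀ e ∈ M.E, M.rk {e} = 1) ∧
    ∀ e ∈ M.E, ∀ f ∈ M.E, e ≠ f → M.rk ({e, f} : Finset α) = 2

def NoIsthmus (M : FinMatroid α) : Prop :=
  ∀ e ∈ M.E, M.rk (M.E.erase e) = M.rk M.E

def IsMinDist (M : FinMatroid α) (d : ℕ) : Prop :=
  (∃ X ⊆ M.E, M.rk (M.E \ X) < M.rk M.E ∧ X.card = d) ∧
    ∀ X ⊆ M.E, M.rk (M.E \ X) < M.rk M.E → d ≤ X.card

def IsAtomCF (M : FinMatroid α) (Z : Finset α) : Prop :=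
  M.IsCyclicFlat Z ∧ Z ≠ ∅ ∧ ¬ ∃ Z', M.IsCyclicFlat Z' ∧ ∅ ⊂ Z' ∧ Z' ⊂ Z

def IsCoatomCF (M : FinMatroid α) (Z : Finset α) : Prop :=
  M.IsCyclicFlat Z ∧ Z ⊂ M.E ∧ ¬ ∃ Z', M.IsCyclicFlat Z' ∧ Z ⊂ Z' ∧ Z' ⊂ M.E

def IsCircuit (M : FinMatroid α) (C : Finset α) : Prop :=
  C ⊆ M.E ∧ M.rk C < C.card ∧ ∀ D ⊂ C, M.rk D = D.card

end FinMatroid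

/-!
A nonempty cyclic set has positive nullity, and if `A ⊊ Z` with `Z` cyclic then removing an
element of `Z − A` from `Z` keeps the rank, so `η(A) < η(Z)`. Hence a cyclic flat of nullity
one has no nonempty cyclic flat below it, in any matroid.

Conversely let `η(Z) ≥ 2` and represent `M` by vectors `φ` over `GF(2)`. Take a circuit
`C ⊆ Z`. If `ρ(C) < ρ(Z)` put `U = C`. Otherwise `C` spans `Z`, `|C| = ρ(Z) + 1 < |Z|`, and
some `f ∈ Z − C` has `φ f = ∑_{x ∈ D} φ x` for a set `D ⊆ C`. Over `GF(2)` the vectors of a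
circuit sum to zero, so `∑_{x ∈ C − D} φ x = φ f`; simplicity rules out `|C − D| ≤ 1`. Then
`U = D ∪ {f}` sums to zero, so it is cyclic, and `ρ(U) ≤ |D| < ρ(Z)`. In both cases the
closure of `U` is a nonempty cyclic flat strictly inside `Z`.
-/

open Finset Submodule Module

theorem sum_mem_span_image {R M ι : Type*} [Semiring R] [AddCommMonoid M] [Module R M]
    (φ : ι → M) (D : Finset ι) : ∑ x ∈ D, φ x ∈ span R (φ '' (D : Set ι)) :=
  sum_mem fun _ hx => subset_span (Set.mem_image_of_mem φ hx)

theorem exists_subset_sum_eq_of_mem_span_image {α V : Type*} [AddCommGroup V]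
    [Module (ZMod 2) V] {φ : α → V} {A : Finset α} {v : V}
    (hv : v ∈ span (ZMod 2) (φ '' (A : Set α))) : ∃ D ⊆ A, ∑ x ∈ D, φ x = v := by
  classical
  obtain ⟨c, hc⟩ := (mem_span_image_finset_iff_exists_fun' (ZMod 2)).1 hv
  refine ⟨A.filter (c · = 1), filter_subset _ _, ?_⟩
  rw [sum_filter, ← hc]
  refine sum_congr rfl fun x _ => ?_
  rcases (by decide : ∀ a : ZMod 2, a = 0 ∨ a = 1) (c x) with h | h <;> simp [h]

namespace FinMatroid

variable {α : Type*} [DecidableEq α] (M : FinMatroid α) {A B C D T U Z : Finset α} {e f : α}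

theorem rk_empty : M.rk ∅ = 0 := by
  simpa using M.rk_le_card ∅ (empty_subset _)

theorem rk_union_le (hA : A ⊆ M.E) (hT : T ⊆ M.E) : M.rk (A ∪ T) ≤ M.rk A + T.card := by
  have := M.rk_submod A T hA hT
  have := M.rk_le_card T hT
  omega

theorem rk_add_card_le_of_subset (hAB : A ⊆ B) (hB : B ⊆ M.E) :
    M.rk B + A.card ≤ M.rk A + B.card := by
  have h := M.rk_union_le (T := B \ A) (hAB.trans hB) (sdiff_subset.trans hB)
  rw [union_sdiff_of_subset hAB] at h
  have := card_sdiff_add_card_eq_card hAB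
  omega

theorem rk_insert_eq_of_subset (hAB : A ⊆ B) (hB : B ⊆ M.E) (he : e ∈ M.E)
    (h : M.rk (insert e A) = M.rk A) : M.rk (insert e B) = M.rk B := by
  have hsub := M.rk_submod (insert e A) B (insert_subset he (hAB.trans hB)) hB
  rw [insert_union, union_eq_right.2 hAB] at hsub
  have := M.rk_mono A _ (subset_inter (subset_insert e A) hAB) (inter_subset_right.trans hB)
  have := M.rk_mono B _ (subset_insert e B) (insert_subset he hB)
  omega

theorem mem_cl : e ∈ M.cl A ↔ e ∈ M.E ∧ M.rk (insert e A) = M.rk A := mem_filter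

theorem cl_subset_ground : M.cl A ⊆ M.E := filter_subset _ _

theorem subset_cl (hA : A ⊆ M.E) : A ⊆ M.cl A :=
  fun e he => M.mem_cl.2 ⟨hA he, by rw [insert_eq_of_mem he]⟩

theorem cl_subset_cl (hAB : A ⊆ B) (hB : B ⊆ M.E) : M.cl A ⊆ M.cl B := fun e he => by
  obtain ⟨heE, h⟩ := M.mem_cl.1 he
  exact M.mem_cl.2 ⟨heE, M.rk_insert_eq_of_subset hAB hB heE h⟩

theorem rk_union_of_subset_cl (hA : A ⊆ M.E) (hT : T ⊆ M.cl A) : M.rk (A ∪ T) = M.rk A := by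
  induction T using Finset.induction_on with
  | empty => rw [union_empty]
  | insert e T _ ih =>
    obtain ⟨heE, he⟩ := M.mem_cl.1 (hT (mem_insert_self e T))
    have hT' := (subset_insert e T).trans hT
    rw [union_insert, M.rk_insert_eq_of_subset subset_union_left
      (union_subset hA (hT'.trans M.cl_subset_ground)) heE he, ih hT']

theorem rk_cl (hA : A ⊆ M.E) : M.rk (M.cl A) = M.rk A := by
  simpa [union_eq_right.2 (M.subset_cl hA)] using M.rk_union_of_subset_cl hA subset_rfl

theorem cl_cl (hA : A ⊆ M.E) : M.cl (M.cl A) = M.cl A := by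
  refine (M.subset_cl M.cl_subset_ground).antisymm' fun e he => ?_
  obtain ⟨heE, h⟩ := M.mem_cl.1 he
  refine M.mem_cl.2 ⟨heE, ?_⟩
  have := M.rk_mono _ _ (insert_subset_insert e (M.subset_cl hA))
    (insert_subset heE M.cl_subset_ground)
  have := M.rk_mono _ _ (subset_insert e A) (insert_subset heE hA)
  rw [M.rk_cl hA] at h
  omega

theorem isCyclic_iff : M.IsCyclic U ↔ U ⊆ M.E ∧ ∀ e ∈ U, M.rk (U.erase e) = M.rk U :=
  and_congr_right fun _ => filter_eq_self

variable {M}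

theorem IsCyclicFlat.isCyclic (hZ : M.IsCyclicFlat Z) : M.IsCyclic Z := ⟨hZ.1, hZ.2.2⟩

theorem IsCyclic.rk_lt_card (hU : M.IsCyclic U) (hne : U.Nonempty) : M.rk U < U.card := by
  obtain ⟨e, he⟩ := hne
  have := M.rk_le_card _ (erase_subset e U |>.trans hU.1)
  rw [(M.isCyclic_iff.1 hU).2 e he, card_erase_of_mem he] at this
  have := card_pos.2 ⟨e, he⟩
  omega

theorem IsCyclic.card_add_rk_lt_of_ssubset (hZ : M.IsCyclic Z) (hAZ : A ⊂ Z) :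
    A.card + M.rk Z < Z.card + M.rk A := by
  obtain ⟨e, heZ, heA⟩ := exists_of_ssubset hAZ
  have h := M.rk_add_card_le_of_subset (subset_erase.2 ⟨hAZ.subset, heA⟩)
    (erase_subset e Z |>.trans hZ.1)
  rw [(M.isCyclic_iff.1 hZ).2 e heZ, card_erase_of_mem heZ] at h
  have := card_pos.2 ⟨e, heZ⟩
  omega

theorem IsCyclic.isCyclicFlat_cl (hU : M.IsCyclic U) : M.IsCyclicFlat (M.cl U) := by
  refine ⟨M.cl_subset_ground, M.cl_cl hU.1, filter_eq_self.2 fun e _ => ?_⟩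
  obtain ⟨S, hS, hSrk⟩ : ∃ S ⊆ (M.cl U).erase e, M.rk S = M.rk U := by
    by_cases heU : e ∈ U
    · exact ⟨U.erase e, erase_subset_erase e (M.subset_cl hU.1), (M.isCyclic_iff.1 hU).2 e heU⟩
    · exact ⟨U, subset_erase.2 ⟨M.subset_cl hU.1, heU⟩, rfl⟩
  have := M.rk_mono _ _ hS (erase_subset e _ |>.trans M.cl_subset_ground)
  have := M.rk_mono _ _ (erase_subset e (M.cl U)) M.cl_subset_ground
  have := M.rk_cl hU.1
  omega

theorem IsCyclicFlat.exists_isCyclicFlat_between (hZ : M.IsCyclicFlat Z) (hU : M.IsCyclic U)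
    (hne : U.Nonempty) (hUZ : U ⊆ Z) (hrk : M.rk U < M.rk Z) :
    ∃ Z', M.IsCyclicFlat Z' ∧ ∅ ⊂ Z' ∧ Z' ⊂ Z := by
  refine ⟨M.cl U, hU.isCyclicFlat_cl, empty_ssubset.2 (hne.mono (M.subset_cl hU.1)), ?_⟩
  refine ssubset_of_subset_of_ne (hZ.2.1 ▸ M.cl_subset_cl hUZ hZ.1) fun h => ?_
  have := M.rk_cl hU.1
  rw [h] at this
  omega

theorem exists_isCircuit_subset (hA : A ⊆ M.E) (hdep : M.rk A < A.card) :
    ∃ C ⊆ A, M.IsCircuit C := by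
  obtain ⟨C, hCA, hC, hmin⟩ :=
    exists_minimal_le_of_wellFoundedLT (fun D => M.rk D < D.card) A hdep
  refine ⟨C, hCA, hCA.trans hA, hC, fun D hDC => ?_⟩
  have := M.rk_le_card D (hDC.subset.trans (hCA.trans hA))
  by_contra hD
  exact hDC.not_subset (hmin (by omega) hDC.subset)

theorem IsCircuit.eq_of_subset (hC : M.IsCircuit C) (hDC : D ⊆ C) (hD : M.rk D < D.card) :
    D = C := by
  by_contra hne
  have := hC.2.2 D (ssubset_of_subset_of_ne hDC hne)
  omega

theorem IsCircuit.nonempty (hC : M.IsCircuit C) : C.Nonempty := by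
  rw [nonempty_iff_ne_empty]
  rintro rfl
  have := hC.2.1
  rw [M.rk_empty, card_empty] at this
  omega

theorem IsCircuit.rk_add_one (hC : M.IsCircuit C) : M.rk C + 1 = C.card := by
  obtain ⟨c, hc⟩ := hC.nonempty
  have := hC.2.2 _ (erase_ssubset hc)
  have := M.rk_mono _ _ (erase_subset c C) hC.1
  have := hC.2.1
  rw [card_erase_of_mem hc] at *
  omega

theorem IsCircuit.isCyclic (hC : M.IsCircuit C) : M.IsCyclic C := by
  refine M.isCyclic_iff.2 ⟨hC.1, fun c hc => ?_⟩
  have := hC.2.2 _ (erase_ssubset hc)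
  have := hC.rk_add_one
  rw [card_erase_of_mem hc] at *
  omega

section Representation

variable {K V : Type*} [Field K] [AddCommGroup V] [Module K V]

variable (M K) in
def IsRepresentation (φ : α → V) : Prop :=
  ∀ A ⊆ M.E, M.rk A = finrank K (span K (φ '' (A : Set α)))

variable {φ : α → V}

theorem IsRepresentation.rk_insert_eq_iff (hφ : M.IsRepresentation K φ) (hA : A ⊆ M.E)
    (he : e ∈ M.E) : M.rk (insert e A) = M.rk A ↔ φ e ∈ span K (φ '' (A : Set α)) := by
  have hins := hφ _ (insert_subset he hA)
  rw [coe_insert, Set.image_insert_eq] at hins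
  rw [hins, hφ A hA]
  refine ⟨fun h => ?_, fun h => by rw [span_insert_eq_span h]⟩
  have := FiniteDimensional.span_of_finite K ((A.finite_toSet.image φ).insert (φ e))
  rw [eq_of_le_of_finrank_le (span_mono (Set.subset_insert _ _)) h.le]
  exact subset_span (Set.mem_insert _ _)

theorem IsRepresentation.isCyclic_of_sum_eq_zero (hφ : M.IsRepresentation K φ) (hU : U ⊆ M.E)
    (hsum : ∑ x ∈ U, φ x = 0) : M.IsCyclic U := by
  refine M.isCyclic_iff.2 ⟨hU, fun e he => ?_⟩
  have hUe : U.erase e ⊆ M.E := (erase_subset e U).trans hU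
  rw [← add_sum_erase U φ he, add_eq_zero_iff_eq_neg] at hsum
  have := (hφ.rk_insert_eq_iff hUe (hU he)).2 (hsum ▸ neg_mem (sum_mem_span_image φ _))
  rwa [insert_erase he, eq_comm] at this

theorem Simple.rep_ne_zero (hs : M.Simple) (hφ : M.IsRepresentation K φ) (he : e ∈ M.E) :
    φ e ≠ 0 := fun h0 => by
  have := hφ {e} (singleton_subset_iff.2 he)
  rw [hs.1 e he, coe_singleton, Set.image_singleton, h0, span_zero_singleton, finrank_bot] at this
  omega

theorem Simple.injOn_rep (hs : M.Simple) (hφ : M.IsRepresentation K φ) : Set.InjOn φ M.E := by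
  intro e he f hf hef
  by_contra hne
  have hpair := hφ {e, f} (insert_subset he (singleton_subset_iff.2 hf))
  have hsingle := hφ {f} (singleton_subset_iff.2 hf)
  rw [coe_pair, Set.image_pair, hef, Set.pair_eq_singleton] at hpair
  rw [coe_singleton, Set.image_singleton] at hsingle
  have := hs.2 e he f hf hne
  have := hs.1 f hf
  omega

end Representation

section Binary

variable {V : Type*} [AddCommGroup V] [Module (ZMod 2) V] {φ : α → V}

theorem IsCircuit.sum_eq_zero (hφ : M.IsRepresentation (ZMod 2) φ) (hC : M.IsCircuit C) :
    ∑ x ∈ C, φ x = 0 := by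
  obtain ⟨c, hc⟩ := hC.nonempty
  have hCc : C.erase c ⊆ M.E := (erase_subset c C).trans hC.1
  have hspan := (hφ.rk_insert_eq_iff hCc (hC.1 hc)).1 (by
    rw [insert_erase hc, (M.isCyclic_iff.1 hC.isCyclic).2 c hc])
  obtain ⟨D, hDC, hD⟩ := exists_subset_sum_eq_of_mem_span_image hspan
  have hcD : c ∉ D := fun h => notMem_erase c C (hDC h)
  have hsum : ∑ x ∈ insert c D, φ x = 0 := by rw [sum_insert hcD, hD, ZModModule.add_self]
  have hsub : insert c D ⊆ C := insert_subset hc (hDC.trans (erase_subset c C))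
  have hcyc := hφ.isCyclic_of_sum_eq_zero (hsub.trans hC.1) hsum
  rwa [← hC.eq_of_subset hsub (hcyc.rk_lt_card (insert_nonempty c D))]

theorem IsCircuit.card_add_two_le (hs : M.Simple) (hφ : M.IsRepresentation (ZMod 2) φ)
    (hC : M.IsCircuit C) (hDC : D ⊆ C) (hf : f ∈ M.E) (hfC : f ∉ C)
    (hD : ∑ x ∈ D, φ x = φ f) : D.card + 2 ≤ C.card := by
  have hrest : ∑ x ∈ C \ D, φ x = φ f := by
    rw [← sub_eq_zero, ZModModule.sub_eq_add, ← hD, sum_sdiff hDC, hC.sum_eq_zero hφ]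
  have hcard := card_sdiff_add_card_eq_card hDC
  by_contra hlt
  obtain h | h : (C \ D).card = 0 ∨ (C \ D).card = 1 := by omega
  · rw [card_eq_zero.1 h, sum_empty] at hrest
    exact hs.rep_ne_zero hφ hf hrest.symm
  · obtain ⟨c, h⟩ := card_eq_one.1 h
    rw [h, sum_singleton] at hrest
    have hcC : c ∈ C := (mem_sdiff.1 (h ▸ mem_singleton_self c)).1
    exact hfC (hs.injOn_rep hφ hf (hC.1 hcC) hrest.symm ▸ hcC)

theorem exists_isCyclic_rk_lt (hs : M.Simple) (hφ : M.IsRepresentation (ZMod 2) φ)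
    (hZ : Z ⊆ M.E) (hnull : M.rk Z + 2 ≤ Z.card) :
    ∃ U ⊆ Z, U.Nonempty ∧ M.IsCyclic U ∧ M.rk U < M.rk Z := by
  obtain ⟨C, hCZ, hC⟩ := M.exists_isCircuit_subset hZ (by omega)
  have hCrk := hC.rk_add_one
  have hCZrk := M.rk_mono _ _ hCZ hZ
  by_cases hlt : M.rk C < M.rk Z
  · exact ⟨C, hCZ, hC.nonempty, hC.isCyclic, hlt⟩
  obtain ⟨f, hfZ, hfC⟩ : ∃ f ∈ Z, f ∉ C :=
    not_subset.1 fun hZC => by have := card_le_card hZC; omega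
  have hfE := hZ hfZ
  have hspan : φ f ∈ span (ZMod 2) (φ '' (C : Set α)) := by
    refine (hφ.rk_insert_eq_iff hC.1 hfE).1 (le_antisymm ?_ ?_)
    · have := M.rk_mono _ _ (insert_subset hfZ hCZ) hZ
      omega
    · exact M.rk_mono _ _ (subset_insert f C) (insert_subset hfE hC.1)
  obtain ⟨D, hDC, hD⟩ := exists_subset_sum_eq_of_mem_span_image hspan
  have hfD : f ∉ D := fun h => hfC (hDC h)
  have hDE : D ⊆ M.E := hDC.trans hC.1
  refine ⟨insert f D, insert_subset hfZ (hDC.trans hCZ), insert_nonempty f D,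
    hφ.isCyclic_of_sum_eq_zero (insert_subset hfE hDE) ?_, ?_⟩
  · rw [sum_insert hfD, hD, ZModModule.add_self]
  · have hUrk := (hφ.rk_insert_eq_iff hDE hfE).2 (hD ▸ sum_mem_span_image φ D)
    have := hC.card_add_two_le hs hφ hDC hfE hfC hD
    have := M.rk_le_card D hDE
    omega

end Binary

end FinMatroid

/-- In a simple binary matroid, a cyclic flat `Z` is an atom of the
lattice of cyclic flats iff `η(Z) = |Z| − ρ(Z) = 1`. -/
theorem atom_iff_nullity_one {α : Type*} [DecidableEq α] (M : FinMatroid α)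
    (hs : M.Simple) (hb : M.IsBinary) (Z : Finset α) (hZ : M.IsCyclicFlat Z) :
    (Z ≠ ∅ ∧ ¬ ∃ Z', M.IsCyclicFlat Z' ∧ ∅ ⊂ Z' ∧ Z' ⊂ Z) ↔ Z.card - M.rk Z = 1 := by
  obtain ⟨m, φ, hφ⟩ := hb
  constructor
  · rintro ⟨hne, hatom⟩
    have := hZ.isCyclic.rk_lt_card (nonempty_iff_ne_empty.2 hne)
    by_contra h1
    obtain ⟨U, hUZ, hUne, hU, hrk⟩ := M.exists_isCyclic_rk_lt hs hφ hZ.1 (by omega)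
    exact hatom (hZ.exists_isCyclicFlat_between hU hUne hUZ hrk)
  · intro h1
    refine ⟨?_, ?_⟩
    · rintro rfl
      simp [M.rk_empty] at h1
    · rintro ⟨Z', hZ', hne, hZ'Z⟩
      have := hZ'.isCyclic.rk_lt_card (empty_ssubset.1 hne)
      have := hZ.isCyclic.card_add_rk_lt_of_ssubset hZ'Z
      omega
end

section
/- Let M = (E, ρ) be a binary matroid with |E| = n, rank k = ρ(E) ≥ 2, and minimum distance d. Then there exists a subset A ⊆ E with |A| = n − d and ρ(A) = k − 1 such that the minimum distance d' of the restriction M|A satisfies 2·d' ≥ d. -/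
open Finset

/-!
Write `supp f = {e ∈ E : f (φ e) ≠ 0}` for a linear functional `f` on the representation space;
these are the codewords of the code of `M`. A set `X` drops the rank of `E` exactly when it
contains the support of a nonzero codeword, so `d` is the minimum weight of the code. Let `c` be a
codeword of weight `d` and `A = E \ supp c`; minimality of `d` forces `ρ(A) = k - 1`. If `Y ⊆ A`
drops the rank of `A`, some codeword `c'` is nonzero on `A` but vanishes on `A \ Y`. Over `GF(2)`
the support of `c + c'` is `supp c ∆ supp c'`, and both `c'` and `c + c'` are nonzero, so
`2d ≤ |supp c'| + |supp c ∆ supp c'| = |supp c| + 2 |supp c' ∩ A| ≤ d + 2 |Y|`.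
-/

open Module Submodule

open scoped symmDiff

theorem Finset.card_add_card_symmDiff {α : Type*} [DecidableEq α] (s t : Finset α) :
    t.card + (s ∆ t).card = s.card + 2 * (t \ s).card := by
  rw [symmDiff_def, sup_eq_union, card_union_of_disjoint disjoint_sdiff_sdiff]
  have hs := card_inter_add_card_sdiff s t
  have ht := card_inter_add_card_sdiff t s
  rw [inter_comm] at ht
  omega

section Dual

variable {ι K V : Type*} [Field K] [AddCommGroup V] [Module K V] [FiniteDimensional K V]

theorem finrank_span_image_lt_iff_exists_dual {φ : ι → V} {S T : Set ι} (hST : S ⊆ T) :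
    finrank K (span K (φ '' S)) < finrank K (span K (φ '' T)) ↔
      ∃ f : Dual K V, (∀ i ∈ S, f (φ i) = 0) ∧ ∃ i ∈ T, f (φ i) ≠ 0 := by
  constructor
  · intro hlt
    obtain ⟨i, hiT, hi⟩ : ∃ i ∈ T, φ i ∉ span K (φ '' S) := by
      by_contra! h
      refine hlt.not_ge (finrank_mono (span_le.2 ?_))
      rintro _ ⟨i, hi, rfl⟩
      exact h i hi
    obtain ⟨f, hfi, hfS⟩ := exists_dual_map_eq_bot_of_notMem hi inferInstance
    refine ⟨f, fun j hj => ?_, i, hiT, hfi⟩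
    have : f (φ j) ∈ (span K (φ '' S)).map f := mem_map_of_mem (subset_span ⟨j, hj, rfl⟩)
    simpa [hfS] using this
  · rintro ⟨f, hfS, i, hiT, hfi⟩
    have hker : span K (φ '' S) ≤ LinearMap.ker f := by
      rw [span_le]
      rintro _ ⟨j, hj, rfl⟩
      exact hfS j hj
    refine finrank_lt_finrank_of_lt (lt_of_le_of_ne (span_mono (Set.image_mono hST)) ?_)
    intro h
    exact hfi (hker (h ▸ subset_span ⟨i, hiT, rfl⟩))

end Dual

namespace FinMatroid

variable {α : Type*} [DecidableEq α] {M : FinMatroid α} {d : ℕ}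

theorem rk_insert_le (M : FinMatroid α) {S : Finset α} {e : α} (hS : S ⊆ M.E) (he : e ∈ M.E) :
    M.rk (insert e S) ≤ M.rk S + 1 := by
  have he' : {e} ⊆ M.E := singleton_subset_iff.2 he
  have hsub := M.rk_submod {e} S he' hS
  have hcard := M.rk_le_card {e} he'
  rw [← insert_eq, card_singleton] at *
  omega

theorem exists_isMinDist (M : FinMatroid α) (h : 0 < M.rk M.E) : ∃ d, M.IsMinDist d := by
  have hP : ∃ c, ∃ X ⊆ M.E, M.rk (M.E \ X) < M.rk M.E ∧ X.card = c := by
    refine ⟨_, M.E, Subset.rfl, ?_, rfl⟩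
    have := M.rk_le_card (M.E \ M.E) sdiff_subset
    simp only [sdiff_self, bot_eq_empty, card_empty] at this ⊢
    omega
  exact ⟨Nat.find hP, Nat.find_spec hP, fun X hX hrk => Nat.find_min' hP ⟨X, hX, hrk, rfl⟩⟩

/-- Removing a minimum-distance set drops the rank by exactly one: otherwise removing all but one
of its elements would already drop the rank. -/
theorem IsMinDist.rk_sdiff_add_one (hd : M.IsMinDist d) {X : Finset α} (hX : X ⊆ M.E)
    (hrk : M.rk (M.E \ X) < M.rk M.E) (hcard : X.card = d) :
    M.rk (M.E \ X) + 1 = M.rk M.E := by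
  obtain ⟨e, he⟩ : X.Nonempty := by
    rw [nonempty_iff_ne_empty]
    rintro rfl
    simp at hrk
  have hfull : M.rk (M.E \ X.erase e) = M.rk M.E := by
    by_contra hne
    have hlt := lt_of_le_of_ne (M.rk_mono _ _ sdiff_subset Subset.rfl) hne
    have := hd.2 _ ((erase_subset e X).trans hX) hlt
    rw [card_erase_of_mem he] at this
    have := card_pos.2 ⟨e, he⟩
    omega
  rw [sdiff_erase (hX he)] at hfull
  have := M.rk_insert_le (S := M.E \ X) sdiff_subset (hX he)
  omega

section Representation

variable {V : Type*} [AddCommGroup V]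

def IsRepresentedBy (M : FinMatroid α) (K : Type*) [Field K] [Module K V] (φ : α → V) : Prop :=
  ∀ A ⊆ M.E, M.rk A = finrank K (span K (φ '' (A : Set α)))

variable {K : Type*} [Field K] [Module K V] {φ : α → V}

theorem IsRepresentedBy.rk_lt_rk_iff [FiniteDimensional K V] (hφ : M.IsRepresentedBy K φ)
    {S T : Finset α} (hST : S ⊆ T) (hT : T ⊆ M.E) :
    M.rk S < M.rk T ↔ ∃ f : Dual K V, (∀ e ∈ S, f (φ e) = 0) ∧ ∃ e ∈ T, f (φ e) ≠ 0 := by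
  rw [hφ S (hST.trans hT), hφ T hT]
  exact finrank_span_image_lt_iff_exists_dual (coe_subset.2 hST)

variable [DecidableEq K]

def supp (M : FinMatroid α) (φ : α → V) (f : Dual K V) : Finset α :=
  M.E.filter fun e => f (φ e) ≠ 0

theorem mem_supp {f : Dual K V} {e : α} : e ∈ M.supp φ f ↔ e ∈ M.E ∧ f (φ e) ≠ 0 :=
  mem_filter

theorem supp_subset (f : Dual K V) : M.supp φ f ⊆ M.E :=
  filter_subset _ _

variable [FiniteDimensional K V]

theorem IsRepresentedBy.rk_sdiff_supp_lt (hφ : M.IsRepresentedBy K φ) {f : Dual K V}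
    (hf : (M.supp φ f).Nonempty) : M.rk (M.E \ M.supp φ f) < M.rk M.E := by
  obtain ⟨e, he⟩ := hf
  refine (hφ.rk_lt_rk_iff sdiff_subset Subset.rfl).2 ⟨f, fun x hx => ?_, e, mem_supp.1 he⟩
  rw [mem_sdiff, mem_supp] at hx
  by_contra hfx
  exact hx.2 ⟨hx.1, hfx⟩

theorem IsRepresentedBy.exists_supp_inter_subset (hφ : M.IsRepresentedBy K φ) {A Y : Finset α}
    (hA : A ⊆ M.E) (hrk : M.rk (A \ Y) < M.rk A) :
    ∃ f : Dual K V, (M.supp φ f ∩ A).Nonempty ∧ M.supp φ f ∩ A ⊆ Y := by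
  obtain ⟨f, hfY, a, haA, hfa⟩ := (hφ.rk_lt_rk_iff sdiff_subset hA).1 hrk
  refine ⟨f, ⟨a, mem_inter.2 ⟨mem_supp.2 ⟨hA haA, hfa⟩, haA⟩⟩, fun e he => ?_⟩
  rw [mem_inter, mem_supp] at he
  by_contra heY
  exact he.1.2 (hfY e (mem_sdiff.2 ⟨he.2, heY⟩))

theorem IsRepresentedBy.le_card_supp (hφ : M.IsRepresentedBy K φ) (hd : M.IsMinDist d)
    {f : Dual K V} (hf : (M.supp φ f).Nonempty) : d ≤ (M.supp φ f).card :=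
  hd.2 _ (supp_subset f) (hφ.rk_sdiff_supp_lt hf)

theorem IsRepresentedBy.exists_card_supp_eq (hφ : M.IsRepresentedBy K φ) (hd : M.IsMinDist d) :
    ∃ f : Dual K V, (M.supp φ f).Nonempty ∧ (M.supp φ f).card = d := by
  obtain ⟨X, hX, hrk, rfl⟩ := hd.1
  obtain ⟨f, hf, hfX⟩ := hφ.exists_supp_inter_subset Subset.rfl hrk
  rw [inter_eq_left.2 (supp_subset f)] at hf hfX
  exact ⟨f, hf, le_antisymm (card_le_card hfX) (hφ.le_card_supp hd hf)⟩

end Representation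

section Binary

variable {V : Type*} [AddCommGroup V] [Module (ZMod 2) V] {φ : α → V}

theorem supp_add (f g : Dual (ZMod 2) V) : M.supp φ (f + g) = M.supp φ f ∆ M.supp φ g := by
  have hxor : ∀ a b : ZMod 2, a + b ≠ 0 ↔ (a ≠ 0 ∧ b = 0 ∨ b ≠ 0 ∧ a = 0) := by decide
  ext e
  simp only [mem_symmDiff, mem_supp, LinearMap.add_apply, hxor]
  tauto

variable [FiniteDimensional (ZMod 2) V]

theorem IsRepresentedBy.le_two_mul_card (hφ : M.IsRepresentedBy (ZMod 2) φ) (hd : M.IsMinDist d)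
    {f : Dual (ZMod 2) V} (hfd : (M.supp φ f).card = d) {Y : Finset α}
    (hrk : M.rk ((M.E \ M.supp φ f) \ Y) < M.rk (M.E \ M.supp φ f)) :
    d ≤ 2 * Y.card := by
  obtain ⟨g, ⟨a, ha⟩, hgY⟩ := hφ.exists_supp_inter_subset sdiff_subset hrk
  have hga := mem_inter.1 ha
  have hfa : a ∉ M.supp φ f := (mem_sdiff.1 hga.2).2
  have hg : d ≤ (M.supp φ g).card := hφ.le_card_supp hd ⟨a, hga.1⟩
  have hfg : d ≤ (M.supp φ (f + g)).card := hφ.le_card_supp hd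
    ⟨a, by rw [supp_add]; exact mem_symmDiff.2 (Or.inr ⟨hga.1, hfa⟩)⟩
  rw [supp_add] at hfg
  have houtside : M.supp φ g \ M.supp φ f = M.supp φ g ∩ (M.E \ M.supp φ f) := by
    rw [← inter_sdiff_assoc, inter_eq_left.2 (supp_subset g)]
  have hcard := card_add_card_symmDiff (M.supp φ f) (M.supp φ g)
  rw [houtside] at hcard
  have := card_le_card hgY
  omega

end Binary

end FinMatroid

open FinMatroid in
/-- If `M` is binary with `n = |E|`, rank `k ≥ 2` and minimum distance
`d`, then there is `A ⊆ E` with `|A| = n − d`, `ρ(A) = k − 1`, such that the minimum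
distance `d'` of `M|A` satisfies `2·d' ≥ d`. -/
theorem exists_residual {α : Type*} [DecidableEq α] (M : FinMatroid α)
    (hb : M.IsBinary) (hk : 2 ≤ M.rk M.E) (d : ℕ) (hd : M.IsMinDist d) :
    ∃ (A : Finset α) (hA : A ⊆ M.E), A.card + d = M.E.card ∧
      M.rk A + 1 = M.rk M.E ∧
      ∃ d' : ℕ, (M.restrict A hA).IsMinDist d' ∧ d ≤ 2 * d' := by
  obtain ⟨m, φ, hφ⟩ := hb
  change M.IsRepresentedBy (ZMod 2) φ at hφ
  obtain ⟨f, hf, hfd⟩ := hφ.exists_card_supp_eq hd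
  set A := M.E \ M.supp φ f
  have hrkA : M.rk A + 1 = M.rk M.E :=
    hd.rk_sdiff_add_one (supp_subset f) (hφ.rk_sdiff_supp_lt hf) hfd
  have hcardA : A.card + d = M.E.card := hfd ▸ card_sdiff_add_card_eq_card (supp_subset f)
  obtain ⟨d', hd'⟩ := (M.restrict A sdiff_subset).exists_isMinDist (show 0 < M.rk A by omega)
  refine ⟨A, sdiff_subset, hcardA, hrkA, d', hd', ?_⟩
  obtain ⟨Y, -, hYrk, rfl⟩ := hd'.1
  exact hφ.le_two_mul_card hd hfd hYrk
end
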